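/- arXiv:0907.5079 — 5 statements merged into one kernel-verified Lean document; each statement's English description precedes it below -/
import Mathlib

section
/- Let Γ be a group acting on the right on a finite graph T and on the left on a finite graph H, and let G be a finite graph. Let Γ act on the exponential graph G^T on the left by (γ·f)(t) = f(t·γ), and hence act on the poset Hom(H, G^T) by (γ·α)(h) = γ·α(γ^{-1}·h); let Hom_Γ(H, G^T) be the subposet of fixed points of this action. Then there exist order-preserving maps φ : Hom(T ×_Γ H, G) → Hom_Γ(H, G^T) and ψ : Hom_Γ(H, G^T) → Hom(T ×_Γ H, G) with ψ∘φ = id and φ(ψ(β)) ≥ β for all β; in particular φ is injective and its image is the image of the closure map φ∘ψ on Hom_Γ(H, G^T), so Hom(T ×_Γ H, G) embeds as a strong deformation retract of Hom_Γ(H, G^T). -/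
/-- A graph: a vertex set with a symmetric adjacency relation (loops allowed). -/
structure LGraph (V : Type) where
  Adj : V → V → Prop
  symm : ∀ x y, Adj x y → Adj y x

/-- Multihomomorphisms from `G` to `H`. -/
def LGraph.IsMultiHom {V W : Type} (G : LGraph V) (H : LGraph W) (α : V → Set W) : Prop :=
  (∀ v, (α v).Nonempty) ∧ ∀ v w, G.Adj v w → ∀ x ∈ α v, ∀ y ∈ α w, H.Adj x y

/-- The Hom poset `Hom(G,H)`. -/
def HomPoset {V W : Type} (G : LGraph V) (H : LGraph W) : Type :=
  {α : V → Set W // G.IsMultiHom H α}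

instance {V W : Type} (G : LGraph V) (H : LGraph W) : PartialOrder (HomPoset G H) :=
  Subtype.partialOrder _

/-- The categorical product of graphs. -/
def LGraph.prod {V W : Type} (G : LGraph V) (H : LGraph W) : LGraph (V × W) where
  Adj a b := G.Adj a.1 b.1 ∧ H.Adj a.2 b.2
  symm _ _ h := ⟨G.symm _ _ h.1, H.symm _ _ h.2⟩

/-- The exponential graph `G^T`. -/
def LGraph.exp {VT VG : Type} (T : LGraph VT) (G : LGraph VG) : LGraph (VT → VG) where
  Adj f f' := ∀ v w, T.Adj v w → G.Adj (f v) (f' w)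
  symm f f' h v w hvw := G.symm _ _ (h w v (T.symm _ _ hvw))

section Twisted

variable {Γ VT VH VG : Type} [Group Γ]

/-- The orbit relation of the diagonal action `γ·(t,h) = (t·γ⁻¹, γ·h)` on `T × H`. -/
def twRel (actT : VT → Γ → VT) (actH : Γ → VH → VH) (a b : VT × VH) : Prop :=
  ∃ γ : Γ, b = (actT a.1 γ⁻¹, actH γ a.2)

/-- The twisted product graph `T ×_Γ H`. -/
def twProd (T : LGraph VT) (H : LGraph VH) (actT : VT → Γ → VT) (actH : Γ → VH → VH) :
    LGraph (Quot (twRel actT actH)) where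
  Adj X Y := ∃ a b, Quot.mk _ a = X ∧ Quot.mk _ b = Y ∧ (T.prod H).Adj a b
  symm X Y h := by
    obtain ⟨a, b, ha, hb, hab⟩ := h
    exact ⟨b, a, hb, ha, (T.prod H).symm _ _ hab⟩

/-- The action of `γ ∈ Γ` on `Hom(H, G^T)`, `(γ·α)(h) = γ·(α(γ⁻¹·h))`, where `Γ`
acts on `G^T` on the left by `(γ·f)(t) = f(t·γ)`. -/
def homActExp (T : LGraph VT) (H : LGraph VH) (G : LGraph VG)
    (actT : VT → Γ → VT) (actH : Γ → VH → VH)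
    (hTadj : ∀ (γ : Γ) t t', T.Adj t t' → T.Adj (actT t γ) (actT t' γ))
    (hHadj : ∀ (γ : Γ) h h', H.Adj h h' → H.Adj (actH γ h) (actH γ h'))
    (γ : Γ) (α : HomPoset H (T.exp G)) : HomPoset H (T.exp G) :=
  ⟨fun h => (fun f t => f (actT t γ)) '' α.1 (actH γ⁻¹ h),
   ⟨fun h => (α.2.1 _).image _,
    fun h h' hhh' x hx y hy => by
      obtain ⟨f, hf, rfl⟩ := hx
      obtain ⟨g, hg, rfl⟩ := hy
      intro v w hvw
      exact α.2.2 _ _ (hHadj γ⁻¹ _ _ hhh') f hf g hg _ _ (hTadj γ _ _ hvw)⟩⟩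

end Twisted

/-!
A multihomomorphism `α : T ×_Γ H → G` transposes to `h ↦ ∏ₜ α[t, h] ⊆ G^T`, which is
`Γ`-invariant because `[t·γ, γ⁻¹·h] = [t, h]`. Conversely an invariant `β : H → G^T`
gives `[t, h] ↦ {f t | f ∈ β h}`, well defined on orbits by invariance. Evaluating a
product of nonempty sets recovers its factors, so the second map undoes the first, and
every `f ∈ β h` lies in the product of its own values, so the composite in the other
order only enlarges `β`.
-/

section Transpose

variable {Γ VT VH VG : Type} [Group Γ] {T : LGraph VT} {H : LGraph VH} {G : LGraph VG}
  {actT : VT → Γ → VT} {actH : Γ → VH → VH}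
  {hTadj : ∀ (γ : Γ) t t', T.Adj t t' → T.Adj (actT t γ) (actT t' γ)}
  {hHadj : ∀ (γ : Γ) h h', H.Adj h h' → H.Adj (actH γ h) (actH γ h')}

theorem twRel_mk_act (γ : Γ) (t : VT) (h : VH) :
    Quot.mk (twRel actT actH) (actT t γ, actH γ⁻¹ h) = Quot.mk _ (t, h) :=
  (Quot.sound ⟨γ⁻¹, by rw [inv_inv]⟩).symm

def curryHom (α : HomPoset (twProd T H actT actH) G) : HomPoset H (T.exp G) :=
  ⟨fun h => Set.univ.pi fun t => α.1 (Quot.mk _ (t, h)),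
    fun _ => Set.univ_pi_nonempty_iff.2 fun _ => α.2.1 _,
    fun h h' hh _ hf _ hg v w hvw =>
      α.2.2 _ _ ⟨(v, h), (w, h'), rfl, rfl, hvw, hh⟩ _ (hf v trivial) _ (hg w trivial)⟩

theorem curryHom_mono : Monotone (curryHom : HomPoset (twProd T H actT actH) G → _) :=
  fun _ _ hle _ _ hf t _ => hle _ (hf t trivial)

theorem curryHom_fixed (hTinv : ∀ (γ : Γ) t, actT (actT t γ) γ⁻¹ = t)
    (hHinv : ∀ (γ : Γ) h, actH γ⁻¹ (actH γ h) = h)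
    (α : HomPoset (twProd T H actT actH) G) (γ : Γ) :
    homActExp T H G actT actH hTadj hHadj γ (curryHom α) = curryHom α := by
  refine Subtype.ext (funext fun h => Set.Subset.antisymm ?_ ?_)
  · rintro _ ⟨f, hf, rfl⟩ t -
    simpa only [twRel_mk_act] using hf (actT t γ) trivial
  · intro x hx
    refine ⟨fun s => x (actT s γ⁻¹), fun s _ => ?_, funext fun t => by simp only [hTinv]⟩
    have hH : actH γ (actH γ⁻¹ h) = h := by simpa only [inv_inv] using hHinv γ⁻¹ h
    have hs := twRel_mk_act (actT := actT) (actH := actH) γ⁻¹ s (actH γ⁻¹ h)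
    rw [inv_inv, hH] at hs
    show x _ ∈ α.1 _
    exact hs ▸ hx (actT s γ⁻¹) trivial

def evalImage (β : HomPoset H (T.exp G)) (p : VT × VH) : Set VG :=
  (fun f => f p.1) '' β.1 p.2

theorem evalImage_eq_of_twRel (hTinv : ∀ (γ : Γ) t, actT (actT t γ) γ⁻¹ = t)
    (hHinv : ∀ (γ : Γ) h, actH γ⁻¹ (actH γ h) = h) {β : HomPoset H (T.exp G)}
    (hβ : ∀ γ, homActExp T H G actT actH hTadj hHadj γ β = β) {a b : VT × VH}
    (hab : twRel actT actH a b) : evalImage β a = evalImage β b := by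
  obtain ⟨γ, rfl⟩ := hab
  have hfix : β.1 (actH γ a.2) = (fun f t => f (actT t γ)) '' β.1 a.2 := by
    have := congrFun (congrArg Subtype.val (hβ γ)) (actH γ a.2)
    dsimp only [homActExp] at this
    rw [← this, hHinv]
  have hT : ∀ t, actT (actT t γ⁻¹) γ = t := fun t => by simpa only [inv_inv] using hTinv γ⁻¹ t
  simp only [evalImage, hfix, Set.image_image, hT]

def uncurryHom (hTinv : ∀ (γ : Γ) t, actT (actT t γ) γ⁻¹ = t)
    (hHinv : ∀ (γ : Γ) h, actH γ⁻¹ (actH γ h) = h) (β : HomPoset H (T.exp G))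
    (hβ : ∀ γ, homActExp T H G actT actH hTadj hHadj γ β = β) :
    HomPoset (twProd T H actT actH) G :=
  ⟨Quot.lift (evalImage β) fun _ _ => evalImage_eq_of_twRel hTinv hHinv hβ,
    Quot.ind fun a => (β.2.1 a.2).image _,
    by
      rintro _ _ ⟨a, b, rfl, rfl, hT, hH⟩ _ ⟨f, hf, rfl⟩ _ ⟨g, hg, rfl⟩
      exact β.2.2 _ _ hH f hf g hg _ _ hT⟩

variable (hTinv : ∀ (γ : Γ) t, actT (actT t γ) γ⁻¹ = t)
  (hHinv : ∀ (γ : Γ) h, actH γ⁻¹ (actH γ h) = h)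

theorem uncurryHom_mono {β β' : HomPoset H (T.exp G)}
    (hβ : ∀ γ, homActExp T H G actT actH hTadj hHadj γ β = β)
    (hβ' : ∀ γ, homActExp T H G actT actH hTadj hHadj γ β' = β') (hle : β ≤ β') :
    uncurryHom hTinv hHinv β hβ ≤ uncurryHom hTinv hHinv β' hβ' :=
  Quot.ind fun _ => Set.image_mono (hle _)

theorem uncurryHom_curryHom (α : HomPoset (twProd T H actT actH) G) :
    uncurryHom (hTadj := hTadj) (hHadj := hHadj) hTinv hHinv (curryHom α)
      (curryHom_fixed hTinv hHinv α) = α :=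
  Subtype.ext <| funext <| Quot.ind fun _ =>
    Set.eval_image_univ_pi (Set.univ_pi_nonempty_iff.2 fun _ => α.2.1 _)

theorem le_curryHom_uncurryHom (β : HomPoset H (T.exp G))
    (hβ : ∀ γ, homActExp T H G actT actH hTadj hHadj γ β = β) :
    β ≤ curryHom (uncurryHom hTinv hHinv β hβ) :=
  fun _ f hf _ _ => ⟨f, hf, rfl⟩

end Transpose

theorem stmt_1_general {Γ VT VH VG : Type} [Group Γ]
    (T : LGraph VT) (H : LGraph VH) (G : LGraph VG)
    (actT : VT → Γ → VT)
    (hT1 : ∀ t, actT t 1 = t)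
    (hTmul : ∀ t (γ δ : Γ), actT t (γ * δ) = actT (actT t γ) δ)
    (hTadj : ∀ (γ : Γ) t t', T.Adj t t' → T.Adj (actT t γ) (actT t' γ))
    (actH : Γ → VH → VH)
    (hH1 : ∀ h, actH 1 h = h)
    (hHmul : ∀ (γ δ : Γ) h, actH (γ * δ) h = actH γ (actH δ h))
    (hHadj : ∀ (γ : Γ) h h', H.Adj h h' → H.Adj (actH γ h) (actH γ h')) :
    ∃ (φ : HomPoset (twProd T H actT actH) G →o
        {α : HomPoset H (T.exp G) // ∀ γ : Γ, homActExp T H G actT actH hTadj hHadj γ α = α})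
      (ψ : {α : HomPoset H (T.exp G) // ∀ γ : Γ, homActExp T H G actT actH hTadj hHadj γ α = α}
        →o HomPoset (twProd T H actT actH) G),
      (∀ α, ψ (φ α) = α) ∧ (∀ β, β ≤ φ (ψ β)) ∧ Function.Injective φ := by
  have hTinv : ∀ (γ : Γ) t, actT (actT t γ) γ⁻¹ = t := fun γ t => by
    rw [← hTmul, mul_inv_cancel, hT1]
  have hHinv : ∀ (γ : Γ) h, actH γ⁻¹ (actH γ h) = h := fun γ h => by
    rw [← hHmul, inv_mul_cancel, hH1]
  let φ : HomPoset (twProd T H actT actH) G →o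
      {α : HomPoset H (T.exp G) // ∀ γ : Γ, homActExp T H G actT actH hTadj hHadj γ α = α} :=
    ⟨fun α => ⟨curryHom α, curryHom_fixed hTinv hHinv α⟩, fun _ _ hle => curryHom_mono hle⟩
  let ψ : {α : HomPoset H (T.exp G) // ∀ γ : Γ, homActExp T H G actT actH hTadj hHadj γ α = α}
      →o HomPoset (twProd T H actT actH) G :=
    ⟨fun β => uncurryHom hTinv hHinv β.1 β.2, fun β β' hle => uncurryHom_mono _ _ β.2 β'.2 hle⟩
  have hψφ : ∀ α, ψ (φ α) = α :=
    uncurryHom_curryHom (hTadj := hTadj) (hHadj := hHadj) hTinv hHinv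
  exact ⟨φ, ψ, hψφ, fun β => le_curryHom_uncurryHom hTinv hHinv β.1 β.2,
    Function.LeftInverse.injective hψφ⟩

/-- `Hom(T ×_Γ H, G)` embeds into the fixed-point poset
`Hom_Γ(H, G^T)` as (the image of a closure map, hence as) a strong deformation
retract: there are order-preserving `φ`, `ψ` with `ψ ∘ φ = id` and `φ(ψ(β)) ≥ β`;
in particular `φ` is injective. -/
theorem stmt_1 {Γ VT VH VG : Type} [Group Γ] [Fintype VT] [Fintype VH] [Fintype VG]
    (T : LGraph VT) (H : LGraph VH) (G : LGraph VG)
    (actT : VT → Γ → VT)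
    (hT1 : ∀ t, actT t 1 = t)
    (hTmul : ∀ t (γ δ : Γ), actT t (γ * δ) = actT (actT t γ) δ)
    (hTadj : ∀ (γ : Γ) t t', T.Adj t t' → T.Adj (actT t γ) (actT t' γ))
    (actH : Γ → VH → VH)
    (hH1 : ∀ h, actH 1 h = h)
    (hHmul : ∀ (γ δ : Γ) h, actH (γ * δ) h = actH γ (actH δ h))
    (hHadj : ∀ (γ : Γ) h h', H.Adj h h' → H.Adj (actH γ h) (actH γ h')) :
    ∃ (φ : HomPoset (twProd T H actT actH) G →o
        {α : HomPoset H (T.exp G) // ∀ γ : Γ, homActExp T H G actT actH hTadj hHadj γ α = α})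
      (ψ : {α : HomPoset H (T.exp G) // ∀ γ : Γ, homActExp T H G actT actH hTadj hHadj γ α = α}
        →o HomPoset (twProd T H actT actH) G),
      (∀ α, ψ (φ α) = α) ∧ (∀ β, β ≤ φ (ψ β)) ∧ Function.Injective φ :=
  stmt_1_general T H G actT hT1 hTmul hTadj actH hH1 hHmul hHadj
end

section
/- Let Γ be a group acting on the left on a finite graph G by graph automorphisms and on a finite poset P by order automorphisms. Let Γ act on Hom(P^1, G) by (γ·α)(x) = γ·α(γ^{-1}·x) with Hom_Γ(P^1,G) the fixed subposet, and let Γ act correspondingly on Poset(P, Hom(1,G)) with Poset_Γ(P, Hom(1,G)) the fixed subposet. Then the maps φ : Hom_Γ(P^1, G) → Poset_Γ(P, Hom(1,G)), defined by φ(α)(x) = the union of α(y) over all atoms y ≤ x, and ψ : Poset_Γ(P, Hom(1,G)) → Hom_Γ(P^1, G), defined by ψ(f)(x) = f(x), are well-defined order-preserving maps satisfying ψ∘φ = id and φ(ψ(f)) ≤ f for all f; in particular Hom_Γ(P^1, G) embeds as a strong deformation retract of Poset_Γ(P, Hom(1,G)). -/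
/-- The atoms (minimal elements) of a poset. -/
def MinVert (P : Type) [PartialOrder P] : Type := {x : P // ∀ y, y ≤ x → y = x}

/-- The reflexive graph `P^1` on the atoms of `P`: `x ~ y` iff they have a common
upper bound. -/
def oneSkel (P : Type) [PartialOrder P] : LGraph (MinVert P) where
  Adj a b := ∃ z, a.1 ≤ z ∧ b.1 ≤ z
  symm a b h := by obtain ⟨z, h1, h2⟩ := h; exact ⟨z, h2, h1⟩

/-- The poset `Hom(1,G)` of cliques of looped vertices of `G`. -/
def CliquePoset {VG : Type} (G : LGraph VG) : Type :=
  {A : Set VG // A.Nonempty ∧ ∀ x ∈ A, ∀ y ∈ A, G.Adj x y}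

instance {VG : Type} (G : LGraph VG) : PartialOrder (CliquePoset G) :=
  Subtype.partialOrder _

section Actions

variable {Γ P VG : Type} [Group Γ] [PartialOrder P] [MulAction Γ P] [MulAction Γ VG]

/-- The induced action of `γ` on the atoms of `P`. -/
def minAct (hPmono : ∀ γ : Γ, Monotone (fun p : P => γ • p)) (γ : Γ)
    (x : MinVert P) : MinVert P :=
  ⟨γ • x.1, fun q hq => by
    have h1 : γ⁻¹ • q ≤ x.1 := by
      have := hPmono γ⁻¹ hq
      simpa using this
    have h2 := x.2 _ h1
    have h3 : γ • (γ⁻¹ • q) = γ • x.1 := by rw [h2]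
    simpa using h3⟩

/-- The action of `γ` on `Hom(P^1, G)`, `(γ·α)(x) = γ·α(γ⁻¹·x)`. -/
def homActSkel (G : LGraph VG)
    (hGadj : ∀ (γ : Γ) v w, G.Adj v w → G.Adj (γ • v) (γ • w))
    (hPmono : ∀ γ : Γ, Monotone (fun p : P => γ • p))
    (γ : Γ) (α : HomPoset (oneSkel P) G) : HomPoset (oneSkel P) G :=
  ⟨fun x => (γ • ·) '' α.1 (minAct hPmono γ⁻¹ x),
   ⟨fun x => (α.2.1 _).image _,
    fun x y hxy u hu v hv => by
      obtain ⟨a, ha, rfl⟩ := hu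
      obtain ⟨b, hb, rfl⟩ := hv
      obtain ⟨z, hz1, hz2⟩ := hxy
      exact hGadj γ _ _ (α.2.2 _ _ ⟨γ⁻¹ • z, hPmono γ⁻¹ hz1, hPmono γ⁻¹ hz2⟩ a ha b hb)⟩⟩

/-- The action of `γ` on `Hom(1,G)` (cliques), by taking images. -/
def cliqueAct (G : LGraph VG)
    (hGadj : ∀ (γ : Γ) v w, G.Adj v w → G.Adj (γ • v) (γ • w))
    (γ : Γ) (A : CliquePoset G) : CliquePoset G :=
  ⟨(γ • ·) '' A.1, A.2.1.image _, fun x hx y hy => by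
    obtain ⟨a, ha, rfl⟩ := hx
    obtain ⟨b, hb, rfl⟩ := hy
    exact hGadj γ _ _ (A.2.2 a ha b hb)⟩

end Actions

/-!
Every `x : P` lies above an atom, since `P` is finite. Restricting a monotone clique-valued `f` to
the atoms gives a multihomomorphism `P^1 → G`, because two atoms below a common `z` are sent into
the clique `f z`. Conversely, `φ(α)(x)` is a clique because any two atoms below `x` are adjacent in
`P^1`. An atom `y` is the only atom below itself, so `ψ(φ α) = α`, while monotonicity of `f` gives
`φ(ψ f) ≤ f`. Both constructions commute with the actions, hence restrict to the fixed points.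
-/

section Atoms

variable {P : Type} [PartialOrder P]

theorem MinVert.exists_le [WellFoundedLT P] (x : P) : ∃ y : MinVert P, y.1 ≤ x := by
  obtain ⟨y, hyx, hy⟩ := exists_minimal_le_of_wellFoundedLT (fun _ => True) x trivial
  exact ⟨⟨y, fun _ hq => hy.eq_of_le trivial hq⟩, hyx⟩

theorem MinVert.eq_of_le {y y' : MinVert P} (h : y'.1 ≤ y.1) : y' = y :=
  Subtype.ext (y.2 _ h)

end Atoms

section Retraction

variable {P VG : Type} [PartialOrder P] (G : LGraph VG)

def atomUnion (α : HomPoset (oneSkel P) G) (x : P) : Set VG :=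
  {v | ∃ y : MinVert P, y.1 ≤ x ∧ v ∈ α.1 y}

variable {G}

theorem atomUnion_isClique [WellFoundedLT P] (α : HomPoset (oneSkel P) G) (x : P) :
    (atomUnion G α x).Nonempty ∧ ∀ v ∈ atomUnion G α x, ∀ w ∈ atomUnion G α x, G.Adj v w := by
  constructor
  · obtain ⟨y, hyx⟩ := MinVert.exists_le x
    obtain ⟨v, hv⟩ := α.2.1 y
    exact ⟨v, y, hyx, hv⟩
  · rintro v ⟨y, hyx, hv⟩ w ⟨y', hy'x, hw⟩
    exact α.2.2 y y' ⟨x, hyx, hy'x⟩ v hv w hw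

theorem atomUnion_mono {α β : HomPoset (oneSkel P) G} (hαβ : α ≤ β) {x x' : P} (hx : x ≤ x') :
    atomUnion G α x ⊆ atomUnion G β x' := by
  rintro v ⟨y, hyx, hv⟩
  exact ⟨y, hyx.trans hx, hαβ y hv⟩

theorem atomUnion_atom (α : HomPoset (oneSkel P) G) (y : MinVert P) :
    atomUnion G α y.1 = α.1 y := by
  ext v
  constructor
  · rintro ⟨y', hy', hv⟩
    rwa [← MinVert.eq_of_le hy']
  · exact fun hv => ⟨y, le_rfl, hv⟩

variable (G)

def skelHomToPoset [WellFoundedLT P] : HomPoset (oneSkel P) G →o (P →o CliquePoset G) where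
  toFun α := ⟨fun x => ⟨atomUnion G α x, atomUnion_isClique α x⟩,
    fun _ _ hx => atomUnion_mono le_rfl hx⟩
  monotone' _ _ hαβ _ := atomUnion_mono hαβ le_rfl

def posetToSkelHom : (P →o CliquePoset G) →o HomPoset (oneSkel P) G where
  toFun f := ⟨fun y => (f y.1).1, fun y => (f y.1).2.1, fun _ _ ⟨z, hyz, hy'z⟩ v hv w hw =>
    (f z).2.2 v (f.mono hyz hv) w (f.mono hy'z hw)⟩
  monotone' _ _ hfg y := hfg y.1

variable {G}

theorem posetToSkelHom_skelHomToPoset [WellFoundedLT P] (α : HomPoset (oneSkel P) G) :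
    posetToSkelHom G (skelHomToPoset G α) = α :=
  Subtype.ext (funext (atomUnion_atom α))

theorem skelHomToPoset_posetToSkelHom_le [WellFoundedLT P] (f : P →o CliquePoset G) :
    skelHomToPoset G (posetToSkelHom G f) ≤ f := by
  rintro x v ⟨y, hyx, hv⟩
  exact f.mono hyx hv

end Retraction

section Equivariance

variable {Γ P VG : Type} [Group Γ] [PartialOrder P] [MulAction Γ P] [MulAction Γ VG]
  {G : LGraph VG} (hGadj : ∀ (γ : Γ) v w, G.Adj v w → G.Adj (γ • v) (γ • w))
  (hPmono : ∀ γ : Γ, Monotone (fun p : P => γ • p))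

theorem minAct_inv_minAct (γ : Γ) (y : MinVert P) :
    minAct hPmono γ⁻¹ (minAct hPmono γ y) = y :=
  Subtype.ext (inv_smul_smul γ y.1)

theorem atomUnion_smul_of_fixed [WellFoundedLT P] {α : HomPoset (oneSkel P) G}
    (hα : ∀ γ : Γ, homActSkel G hGadj hPmono γ α = α) (γ : Γ) (x : P) :
    atomUnion G α (γ • x) = (γ • ·) '' atomUnion G α x := by
  have hαγ : ∀ y, α.1 y = (γ • ·) '' α.1 (minAct hPmono γ⁻¹ y) := fun y =>
    (congrFun (congrArg Subtype.val (hα γ)) y).symm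
  ext v
  constructor
  · rintro ⟨y, hyx, hv⟩
    rw [hαγ y] at hv
    obtain ⟨w, hw, rfl⟩ := hv
    exact ⟨w, ⟨minAct hPmono γ⁻¹ y, (hPmono γ⁻¹ hyx).trans_eq (inv_smul_smul γ x), hw⟩, rfl⟩
  · rintro ⟨w, ⟨y, hyx, hw⟩, rfl⟩
    refine ⟨minAct hPmono γ y, hPmono γ hyx, ?_⟩
    rw [hαγ, minAct_inv_minAct]
    exact ⟨w, hw, rfl⟩

theorem posetToSkelHom_fixed {f : P →o CliquePoset G}
    (hf : ∀ (γ : Γ) (x : P), f (γ • x) = cliqueAct G hGadj γ (f x)) (γ : Γ) :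
    homActSkel G hGadj hPmono γ (posetToSkelHom G f) = posetToSkelHom G f := by
  refine Subtype.ext (funext fun y => ?_)
  have hfy := congrArg Subtype.val (hf γ (γ⁻¹ • y.1))
  rw [smul_inv_smul] at hfy
  exact hfy.symm

end Equivariance

theorem stmt_3_general {Γ P VG : Type} [Group Γ] [PartialOrder P] [Fintype P]
    [MulAction Γ P] [MulAction Γ VG] (G : LGraph VG)
    (hGadj : ∀ (γ : Γ) v w, G.Adj v w → G.Adj (γ • v) (γ • w))
    (hPmono : ∀ γ : Γ, Monotone (fun p : P => γ • p)) :
    ∃ (φ : {α : HomPoset (oneSkel P) G // ∀ γ : Γ, homActSkel G hGadj hPmono γ α = α} →o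
          {f : P →o CliquePoset G // ∀ (γ : Γ) (x : P), f (γ • x) = cliqueAct G hGadj γ (f x)})
      (ψ : {f : P →o CliquePoset G // ∀ (γ : Γ) (x : P), f (γ • x) = cliqueAct G hGadj γ (f x)} →o
          {α : HomPoset (oneSkel P) G // ∀ γ : Γ, homActSkel G hGadj hPmono γ α = α}),
      (∀ α (x : P), ((φ α).1 x).1 = {v | ∃ y : MinVert P, y.1 ≤ x ∧ v ∈ α.1.1 y}) ∧
      (∀ f (y : MinVert P), (ψ f).1.1 y = (f.1 y.1).1) ∧
      (∀ α, ψ (φ α) = α) ∧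
      (∀ f, φ (ψ f) ≤ f) := by
  refine ⟨⟨fun α => ⟨skelHomToPoset G α.1, fun γ x =>
      Subtype.ext (atomUnion_smul_of_fixed hGadj hPmono α.2 γ x)⟩,
      fun _ _ h => (skelHomToPoset G).mono h⟩,
    ⟨fun f => ⟨posetToSkelHom G f.1, posetToSkelHom_fixed hGadj hPmono f.2⟩,
      fun _ _ h => (posetToSkelHom G).mono h⟩,
    fun _ _ => rfl, fun _ _ => rfl,
    fun α => Subtype.ext (posetToSkelHom_skelHomToPoset α.1),
    fun f => skelHomToPoset_posetToSkelHom_le f.1⟩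

/-- the maps `φ(α)(x) = ⋃ {α(y) : y an atom, y ≤ x}` and
`ψ(f)(x) = f(x)` are well-defined order-preserving maps between the fixed-point
poset `Hom_Γ(P^1, G)` and `Poset_Γ(P, Hom(1,G))`, satisfying `ψ ∘ φ = id` and
`φ(ψ(f)) ≤ f`; in particular `Hom_Γ(P^1,G)` embeds as a strong deformation
retract of `Poset_Γ(P, Hom(1,G))`. -/
theorem stmt_3 {Γ P VG : Type} [Group Γ] [PartialOrder P] [Fintype P] [Fintype VG]
    [MulAction Γ P] [MulAction Γ VG] (G : LGraph VG)
    (hGadj : ∀ (γ : Γ) v w, G.Adj v w → G.Adj (γ • v) (γ • w))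
    (hPmono : ∀ γ : Γ, Monotone (fun p : P => γ • p)) :
    ∃ (φ : {α : HomPoset (oneSkel P) G // ∀ γ : Γ, homActSkel G hGadj hPmono γ α = α} →o
          {f : P →o CliquePoset G // ∀ (γ : Γ) (x : P), f (γ • x) = cliqueAct G hGadj γ (f x)})
      (ψ : {f : P →o CliquePoset G // ∀ (γ : Γ) (x : P), f (γ • x) = cliqueAct G hGadj γ (f x)} →o
          {α : HomPoset (oneSkel P) G // ∀ γ : Γ, homActSkel G hGadj hPmono γ α = α}),
      (∀ α (x : P), ((φ α).1 x).1 = {v | ∃ y : MinVert P, y.1 ≤ x ∧ v ∈ α.1.1 y}) ∧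
      (∀ f (y : MinVert P), (ψ f).1.1 y = (f.1 y.1).1) ∧
      (∀ α, ψ (φ α) = α) ∧
      (∀ f, φ (ψ f) ≤ f) :=
  stmt_3_general G hGadj hPmono
end

section
/- Let P be a finite poset on which a group Γ acts freely and strongly regularly by order automorphisms. Then: (i) the relation on the orbit set P/Γ given by [p] ≤ [q] iff γ·p ≤ q for some γ ∈ Γ is a partial order; (ii) the quotient map π : P → P/Γ is strictly order-preserving (p < q implies π(p) < π(q)), hence injective on every chain of P; and (iii) for every chain c' of P/Γ, the set of chains of P that π maps bijectively onto c' is nonempty and forms exactly one orbit under the elementwise Γ-action on chains. -/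
/-!
Strong regularity says that two distinct points of one orbit never have a common upper bound;
moving one of them back along the action, they cannot both be comparable with a common point
either. Hence the quotient map is injective on chains, and if `m` represents the top of a finite
chain `c'` of `P/Γ`, every orbit in `c'` has exactly one point below `m`; these points form a chain
lifting `c'`. Two lifts of `c'` meeting in a point coincide, so all lifts are translates of one.
-/

def OrbitRel (Γ P : Type*) [SMul Γ P] (p q : P) : Prop := ∃ γ : Γ, q = γ • p

def OrbitLE (Γ P : Type*) [SMul Γ P] [LE P] (X Y : Quot (OrbitRel Γ P)) : Prop :=
  ∃ p q, Quot.mk _ p = X ∧ Quot.mk _ q = Y ∧ ∃ γ : Γ, γ • p ≤ q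

def IsStronglyRegular (Γ P : Type*) [Group Γ] [LE P] [MulAction Γ P] : Prop :=
  ∀ (u v m : P) (γ : Γ), u ≤ m → v ≤ m → γ • u = v → γ = 1

def IsChainLift {Γ P : Type*} [SMul Γ P] [LE P] (c : Set P) (c' : Set (Quot (OrbitRel Γ P))) :
    Prop :=
  c.Nonempty ∧ IsChain (· ≤ ·) c ∧ Set.BijOn (Quot.mk _) c c'

section OrbitQuotient

variable {Γ P : Type*} [Group Γ] [MulAction Γ P]

theorem OrbitRel.equivalence : Equivalence (OrbitRel Γ P) where
  refl p := ⟨1, (one_smul Γ p).symm⟩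
  symm := by
    rintro p _ ⟨γ, rfl⟩
    exact ⟨γ⁻¹, (inv_smul_smul γ p).symm⟩
  trans := by
    rintro p _ _ ⟨γ, rfl⟩ ⟨δ, rfl⟩
    exact ⟨δ * γ, (mul_smul δ γ p).symm⟩

theorem OrbitRel.mk_eq_mk_iff {p q : P} :
    Quot.mk (OrbitRel Γ P) p = Quot.mk _ q ↔ ∃ γ : Γ, q = γ • p :=
  ⟨fun h => OrbitRel.equivalence.eqvGen_iff.mp (Quot.eq.mp h), fun h => Quot.sound h⟩

@[simp]
theorem OrbitRel.mk_smul (γ : Γ) (p : P) : Quot.mk (OrbitRel Γ P) (γ • p) = Quot.mk _ p :=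
  (Quot.sound ⟨γ, rfl⟩).symm

variable [PartialOrder P]

theorem orbitLE_mk_iff (hmono : ∀ γ : Γ, Monotone (fun p : P => γ • p)) {p q : P} :
    OrbitLE Γ P (Quot.mk _ p) (Quot.mk _ q) ↔ ∃ γ : Γ, γ • p ≤ q := by
  refine ⟨?_, fun h => ⟨p, q, rfl, rfl, h⟩⟩
  rintro ⟨p', q', hp, hq, γ, hγ⟩
  obtain ⟨α, rfl⟩ := OrbitRel.mk_eq_mk_iff.mp hp.symm
  obtain ⟨β, rfl⟩ := OrbitRel.mk_eq_mk_iff.mp hq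
  refine ⟨β * γ * α, ?_⟩
  simpa [mul_smul] using hmono β hγ

theorem OrbitLE.refl (X : Quot (OrbitRel Γ P)) : OrbitLE Γ P X X := by
  obtain ⟨p, rfl⟩ := Quot.exists_rep X
  exact ⟨p, p, rfl, rfl, 1, (one_smul Γ p).le⟩

theorem OrbitLE.trans (hmono : ∀ γ : Γ, Monotone (fun p : P => γ • p))
    {X Y Z : Quot (OrbitRel Γ P)} (hXY : OrbitLE Γ P X Y) (hYZ : OrbitLE Γ P Y Z) :
    OrbitLE Γ P X Z := by
  obtain ⟨p, rfl⟩ := Quot.exists_rep X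
  obtain ⟨q, rfl⟩ := Quot.exists_rep Y
  obtain ⟨r, rfl⟩ := Quot.exists_rep Z
  obtain ⟨γ, hγ⟩ := (orbitLE_mk_iff hmono).mp hXY
  obtain ⟨δ, hδ⟩ := (orbitLE_mk_iff hmono).mp hYZ
  refine (orbitLE_mk_iff hmono).mpr ⟨δ * γ, ?_⟩
  rw [mul_smul]
  exact (hmono δ hγ).trans hδ

theorem OrbitLE.antisymm (hmono : ∀ γ : Γ, Monotone (fun p : P => γ • p))
    (hreg : IsStronglyRegular Γ P) {X Y : Quot (OrbitRel Γ P)}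
    (hXY : OrbitLE Γ P X Y) (hYX : OrbitLE Γ P Y X) : X = Y := by
  obtain ⟨p, rfl⟩ := Quot.exists_rep X
  obtain ⟨q, rfl⟩ := Quot.exists_rep Y
  obtain ⟨γ, hγ⟩ := (orbitLE_mk_iff hmono).mp hXY
  obtain ⟨δ, hδ⟩ := (orbitLE_mk_iff hmono).mp hYX
  have hδγ : (δ * γ) • p ≤ p := by
    rw [mul_smul]
    exact (hmono δ hγ).trans hδ
  -- `(δ * γ) • p` and `p` have the common upper bound `p`
  have hδ_inv : δ = γ⁻¹ := by
    have := hreg _ p p (δ * γ)⁻¹ hδγ le_rfl (inv_smul_smul _ p)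
    rwa [inv_eq_one, mul_eq_one_iff_eq_inv] at this
  have hq : q ≤ γ • p := by simpa [hδ_inv] using hmono γ hδ
  exact Quot.sound ⟨γ, hq.antisymm hγ⟩

theorem eq_of_le_of_mk_eq (hreg : IsStronglyRegular Γ P) {p q : P} (hpq : p ≤ q)
    (h : Quot.mk (OrbitRel Γ P) p = Quot.mk _ q) : p = q := by
  obtain ⟨γ, rfl⟩ := OrbitRel.mk_eq_mk_iff.mp h
  rw [hreg p (γ • p) (γ • p) γ hpq le_rfl rfl, one_smul]

theorem injOn_mk_of_isChain (hreg : IsStronglyRegular Γ P) {c : Set P}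
    (hc : IsChain (· ≤ ·) c) : Set.InjOn (Quot.mk (OrbitRel Γ P)) c := by
  intro p hp q hq h
  rcases hc.total hp hq with hpq | hqp
  · exact eq_of_le_of_mk_eq hreg hpq h
  · exact (eq_of_le_of_mk_eq hreg hqp h.symm).symm

theorem IsStronglyRegular.eq_one_of_smul_le (hreg : IsStronglyRegular Γ P) {a b : P} {γ : Γ}
    (hab : a ≤ b ∨ b ≤ a) (h : γ • a ≤ b) : γ = 1 := by
  rcases hab with hab | hba
  · exact hreg a _ b γ hab h rfl
  · exact hreg a _ a γ le_rfl (h.trans hba) rfl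

theorem IsStronglyRegular.eq_one_of_comparable (hreg : IsStronglyRegular Γ P)
    (hmono : ∀ γ : Γ, Monotone (fun p : P => γ • p)) {a b : P} {γ : Γ}
    (hab : a ≤ b ∨ b ≤ a) (h : γ • a ≤ b ∨ b ≤ γ • a) : γ = 1 := by
  rcases h with h | h
  · exact hreg.eq_one_of_smul_le hab h
  · have : γ⁻¹ • b ≤ a := by simpa using hmono γ⁻¹ h
    exact inv_eq_one.mp (hreg.eq_one_of_smul_le hab.symm this)

theorem le_of_orbitLE_of_le (hmono : ∀ γ : Γ, Monotone (fun p : P => γ • p))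
    (hreg : IsStronglyRegular Γ P) {p q m : P} (hp : p ≤ m) (hq : q ≤ m)
    (h : OrbitLE Γ P (Quot.mk _ p) (Quot.mk _ q)) : p ≤ q := by
  obtain ⟨γ, hγ⟩ := (orbitLE_mk_iff hmono).mp h
  obtain rfl := hreg p _ m γ hp (hγ.trans hq) rfl
  simpa using hγ

theorem exists_isChainLift [Finite P] (hmono : ∀ γ : Γ, Monotone (fun p : P => γ • p))
    (hreg : IsStronglyRegular Γ P) {c' : Set (Quot (OrbitRel Γ P))} (hne : c'.Nonempty)
    (hc' : IsChain (OrbitLE Γ P) c') : ∃ c, IsChainLift c c' := by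
  let _ : Preorder (Quot (OrbitRel Γ P)) :=
    { le := OrbitLE Γ P, le_refl := OrbitLE.refl, le_trans _ _ _ := OrbitLE.trans hmono }
  replace hc' : IsChain (· ≤ ·) c' := hc'
  obtain ⟨M, hM⟩ := c'.toFinite.exists_maximal hne
  have hle_M : ∀ X ∈ c', X ≤ M := fun X hX => (hc'.total hX hM.prop).elim id (hM.2 hX)
  obtain ⟨m, rfl⟩ := Quot.exists_rep M
  have hc : IsChain (· ≤ ·) {p | p ≤ m ∧ Quot.mk _ p ∈ c'} := by
    rintro p ⟨hpm, hp⟩ q ⟨hqm, hq⟩ -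
    exact (hc'.total hp hq).imp (le_of_orbitLE_of_le hmono hreg hpm hqm)
      (le_of_orbitLE_of_le hmono hreg hqm hpm)
  refine ⟨{p | p ≤ m ∧ Quot.mk _ p ∈ c'}, ⟨m, le_rfl, hM.prop⟩, hc, fun p hp => hp.2,
    injOn_mk_of_isChain hreg hc, ?_⟩
  intro X hX
  obtain ⟨x, rfl⟩ := Quot.exists_rep X
  obtain ⟨γ, hγ⟩ := (orbitLE_mk_iff hmono).mp (hle_M _ hX)
  exact ⟨γ • x, ⟨hγ, by rwa [OrbitRel.mk_smul]⟩, OrbitRel.mk_smul γ x⟩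

namespace IsChainLift

variable {c c₁ c₂ : Set P} {c' : Set (Quot (OrbitRel Γ P))}

theorem smul_image (hmono : ∀ γ : Γ, Monotone (fun p : P => γ • p)) (h : IsChainLift c c')
    (γ : Γ) : IsChainLift ((fun p => γ • p) '' c) c' := by
  obtain ⟨hne, hc, hbij⟩ := h
  refine ⟨hne.image _, hc.image_of_map_rel _ _ _ fun _ _ => (hmono γ ·), ?_, ?_, ?_⟩
  · rintro _ ⟨p, hp, rfl⟩
    simpa using hbij.mapsTo hp
  · rintro _ ⟨p, hp, rfl⟩ _ ⟨q, hq, rfl⟩ h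
    simp only [OrbitRel.mk_smul] at h
    rw [hbij.injOn hp hq h]
  · intro X hX
    obtain ⟨p, hp, rfl⟩ := hbij.surjOn hX
    exact ⟨γ • p, Set.mem_image_of_mem _ hp, OrbitRel.mk_smul γ p⟩

theorem subset_of_mem (hmono : ∀ γ : Γ, Monotone (fun p : P => γ • p))
    (hreg : IsStronglyRegular Γ P) (h₁ : IsChainLift c₁ c') (h₂ : IsChainLift c₂ c')
    {p : P} (hp₁ : p ∈ c₁) (hp₂ : p ∈ c₂) : c₂ ⊆ c₁ := by
  intro q hq
  obtain ⟨r, hr, hrq⟩ := h₁.2.2.surjOn (h₂.2.2.mapsTo hq)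
  obtain ⟨γ, rfl⟩ := OrbitRel.mk_eq_mk_iff.mp hrq
  obtain rfl := hreg.eq_one_of_comparable hmono (h₁.2.1.total hr hp₁) (h₂.2.1.total hq hp₂)
  rwa [one_smul]

theorem exists_eq_smul_image (hmono : ∀ γ : Γ, Monotone (fun p : P => γ • p))
    (hreg : IsStronglyRegular Γ P) (h₁ : IsChainLift c₁ c') (h₂ : IsChainLift c₂ c') :
    ∃ γ : Γ, c₂ = (fun p => γ • p) '' c₁ := by
  obtain ⟨p, hp⟩ := h₁.1
  obtain ⟨q, hq, hpq⟩ := h₂.2.2.surjOn (h₁.2.2.mapsTo hp)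
  obtain ⟨γ, rfl⟩ := OrbitRel.mk_eq_mk_iff.mp hpq.symm
  have h₁' := h₁.smul_image hmono γ
  have hq' : γ • p ∈ (fun p => γ • p) '' c₁ := Set.mem_image_of_mem _ hp
  exact ⟨γ, (h₁'.subset_of_mem hmono hreg h₂ hq' hq).antisymm
    (h₂.subset_of_mem hmono hreg h₁' hq hq')⟩

end IsChainLift

end OrbitQuotient

theorem stmt_4_general {Γ P : Type} [Group Γ] [PartialOrder P] [Fintype P] [MulAction Γ P]
    (hmono : ∀ γ : Γ, Monotone (fun p : P => γ • p))
    (hreg : ∀ (u v m : P) (γ : Γ), u ≤ m → v ≤ m → γ • u = v → γ = 1) :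
    -- the quotient and the induced relation
    ∀ (π : P → Quot (fun p q : P => ∃ γ : Γ, q = γ • p))
      (qle : Quot (fun p q : P => ∃ γ : Γ, q = γ • p) →
             Quot (fun p q : P => ∃ γ : Γ, q = γ • p) → Prop),
      π = Quot.mk _ →
      (∀ X Y, qle X Y ↔ ∃ p q, π p = X ∧ π q = Y ∧ ∃ γ : Γ, γ • p ≤ q) →
      -- (i) partial order
      ((∀ X, qle X X) ∧
       (∀ X Y Z, qle X Y → qle Y Z → qle X Z) ∧
       (∀ X Y, qle X Y → qle Y X → X = Y)) ∧
      -- (ii) strictly order-preserving, injective on chains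
      (∀ p q : P, p < q → qle (π p) (π q) ∧ π p ≠ π q) ∧
      (∀ c : Set P, IsChain (· ≤ ·) c → Set.InjOn π c) ∧
      -- (iii) the chains lifting a chain of the quotient form one nonempty orbit
      (∀ c' : Set (Quot (fun p q : P => ∃ γ : Γ, q = γ • p)),
        c'.Nonempty → IsChain qle c' →
        (∃ c : Set P, c.Nonempty ∧ IsChain (· ≤ ·) c ∧ Set.BijOn π c c') ∧
        (∀ c₁ c₂ : Set P,
          (c₁.Nonempty ∧ IsChain (· ≤ ·) c₁ ∧ Set.BijOn π c₁ c') →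
          (c₂.Nonempty ∧ IsChain (· ≤ ·) c₂ ∧ Set.BijOn π c₂ c') →
          ∃ γ : Γ, c₂ = (fun p => γ • p) '' c₁) ∧
        (∀ (c : Set P) (γ : Γ),
          (c.Nonempty ∧ IsChain (· ≤ ·) c ∧ Set.BijOn π c c') →
          ((fun p => γ • p) '' c).Nonempty ∧ IsChain (· ≤ ·) ((fun p => γ • p) '' c) ∧
            Set.BijOn π ((fun p => γ • p) '' c) c')) := by
  rintro π qle rfl hqle
  obtain rfl : qle = OrbitLE Γ P := funext₂ fun X Y => propext (hqle X Y)
  refine ⟨⟨OrbitLE.refl, fun _ _ _ => OrbitLE.trans hmono,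
    fun _ _ => OrbitLE.antisymm hmono hreg⟩, fun p q hpq => ⟨⟨p, q, rfl, rfl, 1, ?_⟩, ?_⟩,
    fun _ => injOn_mk_of_isChain hreg, fun c' hne hc' => ⟨exists_isChainLift hmono hreg hne hc',
    fun _ _ h₁ h₂ => IsChainLift.exists_eq_smul_image hmono hreg h₁ h₂,
    fun _ γ h => IsChainLift.smul_image hmono h γ⟩⟩
  · simpa using hpq.le
  · exact hpq.ne ∘ eq_of_le_of_mk_eq hreg hpq.le

/-- quotient of a finite poset by a free, strongly regular action.
(i) the induced relation on orbits is a partial order; (ii) the quotient map is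
strictly order-preserving, hence injective on chains; (iii) the chains of `P`
mapped bijectively onto a given chain of `P/Γ` form exactly one nonempty orbit. -/
theorem stmt_4 {Γ P : Type} [Group Γ] [PartialOrder P] [Fintype P] [MulAction Γ P]
    (hmono : ∀ γ : Γ, Monotone (fun p : P => γ • p))
    (hfree : ∀ (γ : Γ) (p : P), γ • p = p → γ = 1)
    (hreg : ∀ (u v m : P) (γ : Γ), u ≤ m → v ≤ m → γ • u = v → γ = 1) :
    -- the quotient and the induced relation
    ∀ (π : P → Quot (fun p q : P => ∃ γ : Γ, q = γ • p))
      (qle : Quot (fun p q : P => ∃ γ : Γ, q = γ • p) →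
             Quot (fun p q : P => ∃ γ : Γ, q = γ • p) → Prop),
      π = Quot.mk _ →
      (∀ X Y, qle X Y ↔ ∃ p q, π p = X ∧ π q = Y ∧ ∃ γ : Γ, γ • p ≤ q) →
      -- (i) partial order
      ((∀ X, qle X X) ∧
       (∀ X Y Z, qle X Y → qle Y Z → qle X Z) ∧
       (∀ X Y, qle X Y → qle Y X → X = Y)) ∧
      -- (ii) strictly order-preserving, injective on chains
      (∀ p q : P, p < q → qle (π p) (π q) ∧ π p ≠ π q) ∧
      (∀ c : Set P, IsChain (· ≤ ·) c → Set.InjOn π c) ∧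
      -- (iii) the chains lifting a chain of the quotient form one nonempty orbit
      (∀ c' : Set (Quot (fun p q : P => ∃ γ : Γ, q = γ • p)),
        c'.Nonempty → IsChain qle c' →
        (∃ c : Set P, c.Nonempty ∧ IsChain (· ≤ ·) c ∧ Set.BijOn π c c') ∧
        (∀ c₁ c₂ : Set P,
          (c₁.Nonempty ∧ IsChain (· ≤ ·) c₁ ∧ Set.BijOn π c₁ c') →
          (c₂.Nonempty ∧ IsChain (· ≤ ·) c₂ ∧ Set.BijOn π c₂ c') →
          ∃ γ : Γ, c₂ = (fun p => γ • p) '' c₁) ∧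
        (∀ (c : Set P) (γ : Γ),
          (c.Nonempty ∧ IsChain (· ≤ ·) c ∧ Set.BijOn π c c') →
          ((fun p => γ • p) '' c).Nonempty ∧ IsChain (· ≤ ·) ((fun p => γ • p) '' c) ∧
            Set.BijOn π ((fun p => γ • p) '' c) c')) :=
  stmt_4_general hmono hreg
end

section
/- Let L be a finite lattice and let P = L \ {⊥, ⊤} be its proper part. Let G be the reflexive comparability graph of P, i.e. the graph with vertex set P in which x is adjacent to y iff x ≤ y or y ≤ x (this is the graph Chain(P)^1). Then G is fine: for every subset M ⊆ P with M ≠ ∅ and ν(M) ≠ ∅, one has ν(M) ∩ ν(ν(M)) ≠ ∅. -/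
/-- A graph: a vertex set with a symmetric adjacency relation (loops allowed). -/
structure SymGraph (V : Type) where
  Adj : V → V → Prop
  symm : ∀ x y, Adj x y → Adj y x

/-- `nu G M` is the set of vertices adjacent to every vertex of `M`. -/
def SymGraph.nu {V : Type} (G : SymGraph V) (M : Set V) : Set V :=
  {v | ∀ u ∈ M, G.Adj u v}

/-- A graph is fine if for every `M` with `M ≠ ∅` and `ν(M) ≠ ∅` one has
`ν(M) ∩ ν(ν(M)) ≠ ∅`. -/
def SymGraph.Fine {V : Type} (G : SymGraph V) : Prop :=
  ∀ M : Set V, M.Nonempty → (G.nu M).Nonempty → (G.nu M ∩ G.nu (G.nu M)).Nonempty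

/-- The reflexive comparability graph of a poset: `x ~ y` iff `x ≤ y` or `y ≤ x`
(this is the graph `Chain(P)^1`). -/
def compGraph (P : Type) [PartialOrder P] : SymGraph P where
  Adj x y := x ≤ y ∨ y ≤ x
  symm _ _ h := h.symm

/-!
Write `A = ν(M)` and `B = ν(A) ⊇ M`; every element of `A` is comparable with every element of `B`,
so it suffices to find a proper element comparable with all of `A ∪ B`. The meet of a set `X` is
comparable with every element comparable with all of `X`, so `⋀ A` or `⋀ B` will do unless one of
them is `⊥`. Both cannot be `⊥`: starting from a minimal `a ∈ A`, `⋀ B = ⊥` yields some `b ∈ B`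
below `a`, and then `⋀ A = ⊥` yields some element of `A` below `b`, contradicting minimality.
-/

namespace SymGraph

variable {V : Type} (G : SymGraph V)

theorem subset_nu_nu (M : Set V) : M ⊆ G.nu (G.nu M) :=
  fun m hm _ hv => G.symm _ _ (hv m hm)

theorem nu_antitone : Antitone G.nu :=
  fun _ _ hMN _ hv u hu => hv u (hMN hu)

theorem fine_of_nu_union_nonempty
    (h : ∀ M : Set V, M.Nonempty → (G.nu M).Nonempty →
      (G.nu (G.nu M ∪ G.nu (G.nu M))).Nonempty) :
    G.Fine := by
  intro M hM hA
  refine (h M hM hA).mono fun v hv => ⟨?_, G.nu_antitone Set.subset_union_left hv⟩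
  exact G.nu_antitone (G.subset_nu_nu M) (G.nu_antitone Set.subset_union_right hv)

end SymGraph

section CompleteLattice

variable {α : Type*} [CompleteLattice α]

theorem le_sInf_or_sInf_le_of_forall {X : Set α} {s : α} (h : ∀ x ∈ X, s ≤ x ∨ x ≤ s) :
    s ≤ sInf X ∨ sInf X ≤ s := by
  by_cases hs : ∀ x ∈ X, s ≤ x
  · exact .inl (le_sInf hs)
  · push Not at hs
    obtain ⟨x, hx, hsx⟩ := hs
    exact .inr ((sInf_le hx).trans ((h x hx).resolve_left hsx))

theorem exists_lt_of_sInf_eq_bot {X : Set α} (hX : sInf X = ⊥) {a : α} (ha : a ≠ ⊥)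
    (h : ∀ x ∈ X, x ≤ a ∨ a ≤ x) : ∃ x ∈ X, x < a := by
  by_contra! hlt
  refine ha (le_bot_iff.mp (hX ▸ le_sInf fun x hx => ?_))
  rcases h x hx with hxa | hax
  · exact (hxa.eq_of_not_lt (hlt x hx)).ge
  · exact hax

theorem sInf_ne_bot_or_sInf_ne_bot [WellFoundedLT α] {X Y : Set α} (hX : X.Nonempty)
    (hXbot : ⊥ ∉ X) (hYbot : ⊥ ∉ Y) (hXY : ∀ x ∈ X, ∀ y ∈ Y, x ≤ y ∨ y ≤ x) :
    sInf X ≠ ⊥ ∨ sInf Y ≠ ⊥ := by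
  by_contra! h
  obtain ⟨x, hx⟩ := exists_minimal_of_wellFoundedLT (· ∈ X) hX
  obtain ⟨y, hy, hyx⟩ := exists_lt_of_sInf_eq_bot h.2 (ne_of_mem_of_not_mem hx.prop hXbot)
    fun y hy => (hXY x hx.prop y hy).symm
  obtain ⟨x', hx', hx'y⟩ := exists_lt_of_sInf_eq_bot h.1 (ne_of_mem_of_not_mem hy hYbot)
    fun x' hx' => hXY x' hx' y hy
  exact hx.not_prop_of_lt (hx'y.trans hyx) hx'

variable {A B : Set {x : α // x ≠ ⊥ ∧ x ≠ ⊤}}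

theorem exists_comparable_union_of_sInf_ne_bot (hA : A.Nonempty)
    (hAB : ∀ a ∈ A, ∀ b ∈ B, a ≤ b ∨ b ≤ a) (hbot : sInf (Subtype.val '' A) ≠ ⊥) :
    ∃ t : {x : α // x ≠ ⊥ ∧ x ≠ ⊤}, ∀ z ∈ A ∪ B, z ≤ t ∨ t ≤ z := by
  obtain ⟨a₀, ha₀⟩ := hA
  have htop : sInf (Subtype.val '' A) ≠ ⊤ := ne_top_of_le_ne_top a₀.2.2 (sInf_le ⟨a₀, ha₀, rfl⟩)
  refine ⟨⟨_, hbot, htop⟩, fun z hz => ?_⟩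
  rcases hz with hzA | hzB
  · exact .inr (sInf_le ⟨z, hzA, rfl⟩)
  · refine le_sInf_or_sInf_le_of_forall ?_
    rintro _ ⟨a, ha, rfl⟩
    exact (hAB a ha z hzB).symm

theorem exists_comparable_union [WellFoundedLT α] (hA : A.Nonempty) (hB : B.Nonempty)
    (hAB : ∀ a ∈ A, ∀ b ∈ B, a ≤ b ∨ b ≤ a) :
    ∃ t : {x : α // x ≠ ⊥ ∧ x ≠ ⊤}, ∀ z ∈ A ∪ B, z ≤ t ∨ t ≤ z := by
  have notMem_bot (S : Set {x : α // x ≠ ⊥ ∧ x ≠ ⊤}) : ⊥ ∉ Subtype.val '' S :=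
    fun ⟨s, _, hs⟩ => s.2.1 hs
  rcases sInf_ne_bot_or_sInf_ne_bot (hA.image _) (notMem_bot A) (notMem_bot B)
    (by rintro _ ⟨a, ha, rfl⟩ _ ⟨b, hb, rfl⟩; exact hAB a ha b hb) with h | h
  · exact exists_comparable_union_of_sInf_ne_bot hA hAB h
  · rw [Set.union_comm]
    exact exists_comparable_union_of_sInf_ne_bot hB (fun b hb a ha => (hAB a ha b hb).symm) h

end CompleteLattice

/-- the reflexive comparability graph of the proper part of a finite
lattice is fine. -/
theorem stmt_9 (L : Type) [Lattice L] [BoundedOrder L] [Fintype L] :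
    (compGraph {x : L // x ≠ ⊥ ∧ x ≠ ⊤}).Fine := by
  let _ : CompleteLattice L := Fintype.toCompleteLattice L
  refine SymGraph.fine_of_nu_union_nonempty _ fun M hM hA => ?_
  exact exists_comparable_union hA (hM.mono (SymGraph.subset_nu_nu _ M)) fun a ha b hb => hb a ha
end

section
/- Let T be a finite graph with a right Z_2-action, let n ≥ 0 and m ≥ 3. Let C^1_{2m} be the reflexive cycle graph on the vertex set Z/2m (i adjacent to j iff i = j or i ≡ j ± 1 mod 2m), with left Z_2-action generated by i ↦ i + m and right Z_2-action generated by i ↦ 2m − 1 − i; let the twisted product T ×_{Z_2} C^1_{2m} carry the right Z_2-action induced by the right action on C^1_{2m} (i.e. [(t,c)]·τ = [(t, 2m−1−c)]). Let K_{n+2} and K_{n+3} carry the Z_2-action exchanging the vertices 1 and 2 and fixing all other vertices. If there exists a Z_2-equivariant graph homomorphism T → K_{n+2}, then there exists a Z_2-equivariant graph homomorphism T ×_{Z_2} C^1_{2m} → K_{n+3}. -/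
/-- A graph: a vertex set with a symmetric adjacency relation (loops allowed). -/
structure LoopGraph (V : Type) where
  Adj : V → V → Prop
  symm : ∀ x y, Adj x y → Adj y x

/-- Graph homomorphisms. -/
def LoopGraph.IsHom {V W : Type} (G : LoopGraph V) (H : LoopGraph W) (f : V → W) : Prop :=
  ∀ v w, G.Adj v w → H.Adj (f v) (f w)

/-- The complete loopless graph `K_n` on `Fin n`. -/
def completeK (n : ℕ) : LoopGraph (Fin n) where
  Adj i j := i ≠ j
  symm _ _ h := h.symm

/-- The reflexive cycle graph `C¹_{2m}` on `ZMod (2m)`. -/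
def cycGraph (m : ℕ) : LoopGraph (ZMod (2 * m)) where
  Adj i j := i = j ∨ i = j + 1 ∨ j = i + 1
  symm i j h := by tauto

/-- The orbit relation of the diagonal `Z₂`-action on `T × C¹_{2m}`, where the
nontrivial element acts by `τ_T` on `T` and by `i ↦ i + m` on the cycle. -/
def twRelC {VT : Type} (tauT : VT → VT) (m : ℕ) (a b : VT × ZMod (2 * m)) : Prop :=
  a = b ∨ b = (tauT a.1, a.2 + (m : ZMod (2 * m)))

/-- The twisted product graph `T ×_{Z₂} C¹_{2m}`. -/
def twProdC {VT : Type} (T : LoopGraph VT) (tauT : VT → VT) (m : ℕ) :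
    LoopGraph (Quot (twRelC tauT m)) where
  Adj X Y := ∃ a b, Quot.mk _ a = X ∧ Quot.mk _ b = Y ∧
    T.Adj a.1 b.1 ∧ (cycGraph m).Adj a.2 b.2
  symm X Y h := by
    obtain ⟨a, b, ha, hb, h1, h2⟩ := h
    exact ⟨b, a, hb, ha, T.symm _ _ h1, (cycGraph m).symm _ _ h2⟩

/-- The right `Z₂`-action on `T ×_{Z₂} C¹_{2m}` induced by the reflection
`i ↦ 2m - 1 - i = -1 - i` of the cycle: `[(t,c)]·τ = [(t, -1-c)]`. -/
def cycAct {VT : Type} (tauT : VT → VT) (m : ℕ)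
    (X : Quot (twRelC tauT m)) : Quot (twRelC tauT m) :=
  Quot.lift (fun a : VT × ZMod (2 * m) => Quot.mk (twRelC tauT m) (a.1, -1 - a.2))
    (by
      rintro a b (rfl | hb)
      · rfl
      · subst hb
        have h2 : ((2 * m : ℕ) : ZMod (2 * m)) = 0 := ZMod.natCast_self _
        have h2c : (2 : ZMod (2 * m)) * (m : ZMod (2 * m)) = 0 := by push_cast at h2; linear_combination h2
        apply Quot.sound
        refine Or.inr ?_
        refine Prod.ext rfl ?_
        show -1 - (a.2 + (m : ZMod (2 * m))) = -1 - a.2 + (m : ZMod (2 * m))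
        linear_combination -h2c) X

/-! An equivariant homomorphism `T → K_{n+2}` induces one `T ×_{Z₂} C¹_{2m} → K_{n+2} ×_{Z₂} C¹_{2m}`,
so it suffices to colour the single graph `K_{n+2} ×_{Z₂} C¹_{2m}` with `n + 3` colours.
Its vertices are the `(x, k)` with `0 ≤ k < m`, since `(x, k + m) ~ (σ x, k)` for the swap `σ = (0 1)`.
Colour `(x, k)` by `x`, except that the new colour `n + 2` replaces colour `0` at `k = 0` and
colour `1` at `k = m - 1`. For `m ≥ 3` these two recolourings are not adjacent on the cycle, and
across the seam from `k = m - 1` to `k = m`, where the twist applies `σ`, both sides give the new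
colour to the same vertex `x = 1`. The reflection `k ↦ -1 - k` swaps the positions `0` and `m - 1`
and also the colours `0` and `1`, so the colouring is equivariant. -/

section Functoriality

variable {VT VS : Type} {T : LoopGraph VT} {S : LoopGraph VS} {tauT : VT → VT} {tauS : VS → VS}
  {m : ℕ}

theorem LoopGraph.IsHom.comp {VU : Type} {U : LoopGraph VU} {g : VS → VU} {f : VT → VS}
    (hg : S.IsHom U g) (hf : T.IsHom S f) : T.IsHom U (g ∘ f) :=
  fun v w h => hg _ _ (hf v w h)

def twProdC.map (m : ℕ) (f : VT → VS) (hf : ∀ t, f (tauT t) = tauS (f t)) :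
    Quot (twRelC tauT m) → Quot (twRelC tauS m) :=
  Quot.map (Prod.map f id) (by
    rintro a b (rfl | rfl)
    · exact Or.inl rfl
    · exact Or.inr (by simp [hf]))

theorem twProdC.isHom_map {f : VT → VS} (hf : ∀ t, f (tauT t) = tauS (f t)) (hfT : T.IsHom S f) :
    (twProdC T tauT m).IsHom (twProdC S tauS m) (twProdC.map m f hf) := by
  rintro _ _ ⟨a, b, rfl, rfl, hab, hc⟩
  exact ⟨Prod.map f id a, Prod.map f id b, rfl, rfl, hfT _ _ hab, hc⟩

theorem twProdC.map_cycAct {f : VT → VS} (hf : ∀ t, f (tauT t) = tauS (f t))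
    (X : Quot (twRelC tauT m)) :
    twProdC.map m f hf (cycAct tauT m X) = cycAct tauS m (twProdC.map m f hf X) := by
  induction X using Quot.ind
  rfl

end Functoriality

section ZModVal

variable {m : ℕ}

theorem ZMod.val_add_one_of_lt {k : ZMod m} (hk : k.val + 1 < m) : (k + 1).val = k.val + 1 := by
  have hone : (1 : ZMod m).val = 1 := by
    rw [ZMod.val_one_eq_one_mod, Nat.mod_eq_of_lt (by omega)]
  rw [ZMod.val_add_of_lt (by omega), hone]

variable [NeZero m]

theorem ZMod.val_add_half (k : ZMod (2 * m)) :
    (k + m).val = if k.val < m then k.val + m else k.val - m := by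
  have hk := k.val_lt
  have hm : 0 < m := Nat.pos_of_neZero m
  rw [ZMod.val_add, ZMod.val_natCast_of_lt (by omega)]
  split_ifs with h
  · exact Nat.mod_eq_of_lt (by omega)
  · rw [Nat.mod_eq_sub_mod (by omega), Nat.mod_eq_of_lt (by omega)]
    omega

theorem ZMod.val_neg_one_sub (k : ZMod m) : (-1 - k).val = m - 1 - k.val := by
  have hk := k.val_lt
  have hcast : (-1 - k : ZMod m) = ((m - 1 - k.val : ℕ) : ZMod m) := by
    rw [Nat.cast_sub (by omega), Nat.cast_sub (by omega), ZMod.natCast_self, Nat.cast_one,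
      ZMod.natCast_zmod_val]
    ring
  rw [hcast, ZMod.val_natCast_of_lt (by omega)]

end ZModVal

namespace TwistedCycleColoring

variable {n m : ℕ}

local notation "σ" => Equiv.swap (0 : Fin (n + 2)) 1
local notation "σ'" => Equiv.swap (0 : Fin (n + 3)) 1

abbrev Recolored (m j : ℕ) (x : Fin (n + 2)) : Prop :=
  (j = 0 ∧ x = 0) ∨ (j = m - 1 ∧ x = 1)

def colorAt (m j : ℕ) (x : Fin (n + 2)) : Fin (n + 3) :=
  if Recolored m j x then Fin.last _ else x.castSucc

theorem colorAt_eq_colorAt_iff {j j' : ℕ} {x y : Fin (n + 2)} :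
    colorAt m j x = colorAt m j' y ↔
      (Recolored m j x ∧ Recolored m j' y) ∨ (¬Recolored m j x ∧ ¬Recolored m j' y ∧ x = y) := by
  unfold colorAt
  split_ifs with hx hy hy <;> simp [hx, hy, Fin.castSucc_ne_last, (Fin.castSucc_ne_last _).symm]

theorem colorAt_injective (hm : 2 ≤ m) (j : ℕ) : Function.Injective (colorAt (n := n) m j) := by
  intro x y h
  rcases colorAt_eq_colorAt_iff.1 h with ⟨hx, hy⟩ | ⟨-, -, h⟩ <;> omega

theorem colorAt_ne_colorAt_succ (hm : 3 ≤ m) {j : ℕ} {x y : Fin (n + 2)}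
    (hxy : x ≠ y) : colorAt m j x ≠ colorAt m (j + 1) y := by
  intro h
  rcases colorAt_eq_colorAt_iff.1 h with ⟨hx, hy⟩ | ⟨-, -, h⟩ <;> omega

theorem colorAt_pred_ne_colorAt_zero_swap (hm : 2 ≤ m) {x y : Fin (n + 2)} (hxy : x ≠ y) :
    colorAt m (m - 1) x ≠ colorAt m 0 (σ y) := by
  intro h
  rcases colorAt_eq_colorAt_iff.1 h with ⟨hx, hy⟩ | ⟨hx, hy, rfl⟩
  · have hx1 : x = 1 := by omega
    have hy1 : y = 1 := by
      simp [Recolored, Equiv.swap_apply_eq_iff] at hy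
      omega
    exact hxy (hx1.trans hy1.symm)
  · have hy0 : y ≠ 0 := by rintro rfl; simp [Recolored] at hx
    have hy1 : y ≠ 1 := by rintro rfl; simp [Recolored] at hy
    exact hxy (Equiv.swap_apply_of_ne_of_ne hy0 hy1)

theorem castSucc_swap (x : Fin (n + 2)) : (σ x).castSucc = σ' x.castSucc := by
  simpa using ((Fin.castSucc_injective (n + 2)).swap_apply 0 1 x).symm

theorem swap_last : σ' (Fin.last (n + 2)) = Fin.last (n + 2) :=
  Equiv.swap_apply_of_ne_of_ne (by simp [Fin.ext_iff]) (by simp [Fin.ext_iff])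

theorem colorAt_reflect {j : ℕ} (hj : j < m) (x : Fin (n + 2)) :
    colorAt m (m - 1 - j) (σ x) = σ' (colorAt m j x) := by
  have hR : Recolored m (m - 1 - j) (σ x) ↔ Recolored m j x := by
    simp only [Recolored, Equiv.swap_apply_eq_iff, Equiv.swap_apply_left, Equiv.swap_apply_right]
    omega
  unfold colorAt
  rw [if_congr hR rfl rfl]
  split_ifs
  · exact swap_last.symm
  · exact castSucc_swap x

def color (m : ℕ) (p : Fin (n + 2) × ZMod (2 * m)) : Fin (n + 3) :=
  if p.2.val < m then colorAt m p.2.val p.1 else colorAt m (p.2.val - m) (σ p.1)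

theorem color_ne_of_val_lt (hm : 3 ≤ m) {x y : Fin (n + 2)} (hxy : x ≠ y) {k : ZMod (2 * m)}
    (hk : k.val < m) : color m (x, k) ≠ color m (y, k) ∧ color m (x, k) ≠ color m (y, k + 1) := by
  have hk1 := ZMod.val_add_one_of_lt (k := k) (by omega)
  simp only [color, if_pos hk]
  refine ⟨(colorAt_injective (by omega) _).ne hxy, ?_⟩
  rw [hk1]
  split_ifs with h
  · exact colorAt_ne_colorAt_succ hm hxy
  · have hkm : k.val = m - 1 := by omega
    rw [hkm, show m - 1 + 1 - m = 0 by omega]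
    exact colorAt_pred_ne_colorAt_zero_swap (by omega) hxy

section

variable [NeZero m]

theorem color_add_half (x : Fin (n + 2)) (k : ZMod (2 * m)) :
    color m (σ x, k + m) = color m (x, k) := by
  have hk := k.val_lt
  simp only [color]
  rw [ZMod.val_add_half]
  split_ifs <;> first | omega | simp

theorem color_neg_one_sub (x : Fin (n + 2)) (k : ZMod (2 * m)) :
    color m (x, -1 - k) = σ' (color m (x, k)) := by
  have hk := k.val_lt
  simp only [color]
  rw [ZMod.val_neg_one_sub]
  split_ifs with h₁ h₂ h₂
  · omega
  · rw [← colorAt_reflect (by omega), Equiv.swap_apply_self]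
    congr 1
    omega
  · rw [← colorAt_reflect h₂]
    congr 1
    omega
  · omega

theorem color_ne (hm : 3 ≤ m) {x y : Fin (n + 2)} (hxy : x ≠ y) (k : ZMod (2 * m)) :
    color m (x, k) ≠ color m (y, k) ∧ color m (x, k) ≠ color m (y, k + 1) := by
  by_cases hk : k.val < m
  · exact color_ne_of_val_lt hm hxy hk
  · have hk' : (k + m).val < m := by
      rw [ZMod.val_add_half, if_neg hk]
      have := k.val_lt
      omega
    rw [← color_add_half x, ← color_add_half y, ← color_add_half y (k + 1), add_right_comm]
    exact color_ne_of_val_lt hm ((Equiv.swap _ _).injective.ne hxy) hk'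

end

theorem exists_equivariant_isHom (hm : 3 ≤ m) :
    ∃ g : Quot (twRelC (Equiv.swap (0 : Fin (n + 2)) 1) m) → Fin (n + 3),
      (twProdC (completeK (n + 2)) (Equiv.swap 0 1) m).IsHom (completeK (n + 3)) g ∧
      ∀ X, g (cycAct (Equiv.swap 0 1) m X) = Equiv.swap 0 1 (g X) := by
  have : NeZero m := ⟨by omega⟩
  refine ⟨Quot.lift (color m) ?_, ?_, ?_⟩
  · rintro a b (rfl | rfl)
    · rfl
    · exact (color_add_half a.1 a.2).symm
  · rintro _ _ ⟨⟨x, k⟩, ⟨y, l⟩, rfl, rfl, hxy, rfl | rfl | rfl⟩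
    · exact (color_ne hm hxy k).1
    · exact (color_ne hm (Ne.symm hxy) l).2.symm
    · exact (color_ne hm hxy k).2
  · rintro ⟨x, k⟩
    exact color_neg_one_sub x k

end TwistedCycleColoring

theorem stmt_15_general {VT : Type} (T : LoopGraph VT)
    (tauT : VT → VT)
    (m n : ℕ) (hm : 3 ≤ m)
    (hcol : ∃ f : VT → Fin (n + 2), T.IsHom (completeK (n + 2)) f ∧
      ∀ t, f (tauT t) = Equiv.swap 0 1 (f t)) :
    ∃ g : Quot (twRelC tauT m) → Fin (n + 3),
      (twProdC T tauT m).IsHom (completeK (n + 3)) g ∧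
      ∀ X, g (cycAct tauT m X) = Equiv.swap 0 1 (g X) := by
  obtain ⟨f, hf, hfτ⟩ := hcol
  obtain ⟨g, hg, hgτ⟩ := TwistedCycleColoring.exists_equivariant_isHom (n := n) hm
  refine ⟨g ∘ twProdC.map m f hfτ, hg.comp (twProdC.isHom_map hfτ hf), fun X => ?_⟩
  simp only [Function.comp_apply, twProdC.map_cycAct, hgτ]

/-- if there is a `Z₂`-equivariant homomorphism `T → K_{n+2}` (with
`Z₂` exchanging the first two vertices of the complete graph), then there is a
`Z₂`-equivariant homomorphism `T ×_{Z₂} C¹_{2m} → K_{n+3}` (for `m ≥ 3`). -/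
theorem stmt_15 {VT : Type} [Fintype VT] (T : LoopGraph VT)
    (tauT : VT → VT) (htauinv : Function.Involutive tauT)
    (htauadj : T.IsHom T tauT)
    (m n : ℕ) (hm : 3 ≤ m)
    (hcol : ∃ f : VT → Fin (n + 2), T.IsHom (completeK (n + 2)) f ∧
      ∀ t, f (tauT t) = Equiv.swap 0 1 (f t)) :
    ∃ g : Quot (twRelC tauT m) → Fin (n + 3),
      (twProdC T tauT m).IsHom (completeK (n + 3)) g ∧
      ∀ X, g (cycAct tauT m X) = Equiv.swap 0 1 (g X) :=
  stmt_15_general T tauT m n hm hcol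
end
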